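/- Let f : ℂ × ℂⁿ → ℂ be analytic in a neighbourhood of the origin, with Taylor expansion f(t,z) = Σ_{(k,β) ∈ ℕ × ℕⁿ} c_{k,β} t^k z^β at the origin. Let α₁, …, α_m ∈ ℕⁿ each have first component 0, write α_i = (0, a_{i2}, …, a_{in}), and set a_j := max_{1≤i≤m} a_{ij} for 2 ≤ j ≤ n. Assume: (a) for every (k,β) with c_{k,β} ≠ 0 and β₁ ≥ 1, one has β_j ≥ a_j for all 2 ≤ j ≤ n; and (b) for every (k,β) with c_{k,β} ≠ 0, k ≥ 1 and β₁ = 0, the vector (β₂,…,β_n), regarded as a vector of ℝ^{n−1}, lies in the Minkowski sum of the convex hull of {(a_{i2},…,a_{in}) : 1 ≤ i ≤ m} and the nonnegative orthant ℝ₊^{n−1}. Then there exist constants C > 0 and r > 0 such that for all (t,z) with |t| ≤ r and |z_j| ≤ r for all j, one has |∂f/∂t (t,z)| + |∂f/∂z₁ (t,z)| ≤ C · Σ_{i=1}^m |z^{α_i}|. (This is relation (r2) in Step 2 of the proof of Theorem 1: condition (iii) of admissibility forces |∂_{t,z₁} f(t,z)| ≲ Σ_i |z^{α_i}| near the origin.)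 -/

import Mathlib

/-!
Every monomial `t^k z^β` that contributes to `∂f/∂t` or `∂f/∂z₁` has `β' = (β₂,…,β_n)` in the
Newton polyhedron `conv{α_i'} + ℝ₊^{n-1}`: under (b) by hypothesis, under (a) because then
`β' ≥ α_i'` for every `i`. On the unit cube `x^b` decreases as `b` grows and
`x^{Σ λ_i a_i} = Π_i (x^{a_i})^{λ_i}`, so weighted AM-GM bounds `x^{β'}` by `Σ_i x^{α_i'}`;
rescaling the polydisc of radius `r` to the unit cube costs only powers of `r`. Summing these
monomial bounds against the convergent majorant `Σ |c_{k,β}| (4r)^{k+|β|}` bounds the difference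
quotients of `f` in the directions `t` and `z₁`, hence the two partial derivatives.
-/

open scoped Pointwise
open Finset

def newtonPolyhedron {κ ι : Type*} (a : κ → ι → ℝ) : Set (ι → ℝ) :=
  convexHull ℝ (Set.range a) + {x | ∀ j, 0 ≤ x j}

theorem prod_rpow_le_of_mem_convexHull_add_nonneg {ι : Type*} [Fintype ι] {s : Set (ι → ℝ)}
    (hs : ∀ a ∈ s, ∀ j, 0 ≤ a j) {x : ι → ℝ} (hx0 : ∀ j, 0 ≤ x j) (hx1 : ∀ j, x j ≤ 1)
    {M : ℝ} (hM : ∀ a ∈ s, ∏ j, x j ^ a j ≤ M) {b : ι → ℝ}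
    (hb : b ∈ convexHull ℝ s + {w | ∀ j, 0 ≤ w j}) :
    ∏ j, x j ^ b j ≤ M := by
  obtain ⟨_, hy, w, hw, rfl⟩ := hb
  obtain ⟨κ, _, μ, a, hμ0, hμ1, has, rfl⟩ := mem_convexHull_iff_exists_fintype.1 hy
  have hμa : ∀ j, 0 ≤ ∑ i, μ i * a i j := fun j =>
    sum_nonneg fun i _ => mul_nonneg (hμ0 i) (hs _ (has i) j)
  calc ∏ j, x j ^ (∑ i, μ i • a i + w) j
      ≤ ∏ j, x j ^ ∑ i, μ i * a i j := by
        refine prod_le_prod (fun j _ => Real.rpow_nonneg (hx0 j) _) fun j _ => ?_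
        refine Real.rpow_le_rpow_of_exponent_ge' (hx0 j) (hx1 j) (hμa j) ?_
        simpa [Finset.sum_apply] using hw j
    _ = ∏ i, (∏ j, x j ^ a i j) ^ μ i := by
        simp_rw [Real.rpow_sum_of_nonneg (hx0 _) fun i _ => mul_nonneg (hμ0 i) (hs _ (has i) _)]
        rw [prod_comm]
        refine prod_congr rfl fun i _ => ?_
        rw [← Real.finsetProd_rpow _ _ fun j _ => Real.rpow_nonneg (hx0 j) _]
        exact prod_congr rfl fun j _ => by rw [← Real.rpow_mul (hx0 j), mul_comm]
    _ ≤ ∑ i, μ i * ∏ j, x j ^ a i j :=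
        Real.geom_mean_le_arith_mean_weighted _ _ _ (fun i _ => hμ0 i) hμ1
          fun i _ => prod_nonneg fun j _ => Real.rpow_nonneg (hx0 j) _
    _ ≤ ∑ i, μ i * M := sum_le_sum fun i _ => mul_le_mul_of_nonneg_left (hM _ (has i)) (hμ0 i)
    _ = M := by rw [← sum_mul, hμ1, one_mul]

theorem natCast_mem_newtonPolyhedron_of_sup_le {κ ι : Type*} [Fintype κ] [Nonempty κ]
    {a : κ → ι → ℕ} {b : ι → ℕ} (h : ∀ j, (univ.sup fun i => a i j) ≤ b j) :
    (fun j => (b j : ℝ)) ∈ newtonPolyhedron fun i j => (a i j : ℝ) := by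
  obtain ⟨i⟩ := ‹Nonempty κ›
  refine ⟨_, subset_convexHull ℝ _ ⟨i, rfl⟩, _, fun j => ?_, add_sub_cancel _ _⟩
  exact sub_nonneg.2 (Nat.cast_le.2 ((le_sup (f := fun i => a i j) (mem_univ i)).trans (h j)))

theorem pow_mul_prod_pow_le_of_mem_newtonPolyhedron {κ ι : Type*} [Fintype κ] [Fintype ι]
    {α : κ → ι → ℕ} {β : ι → ℕ}
    (hβ : (fun j => (β j : ℝ)) ∈ newtonPolyhedron fun i j => (α i j : ℝ))
    {D : ℕ} (hD : ∀ i, ∑ j, α i j ≤ D) {r : ℝ} (hr0 : 0 < r) (hr1 : r ≤ 1)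
    {y : ι → ℝ} (hy0 : ∀ j, 0 ≤ y j) (hyr : ∀ j, y j ≤ r) :
    r ^ D * ∏ j, y j ^ β j ≤ r ^ (∑ j, β j) * ∑ i, ∏ j, y j ^ α i j := by
  set x : ι → ℝ := fun j => y j / r
  have hx0 : ∀ j, 0 ≤ x j := fun j => div_nonneg (hy0 j) hr0.le
  have hy : ∀ (γ : ι → ℕ), ∏ j, y j ^ γ j = r ^ (∑ j, γ j) * ∏ j, x j ^ γ j := fun γ => by
    simp only [x, div_pow, prod_div_distrib, prod_pow_eq_pow_sum]
    field_simp
  have hcube : ∏ j, x j ^ β j ≤ ∑ i, ∏ j, x j ^ α i j := by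
    simp_rw [← Real.rpow_natCast]
    refine prod_rpow_le_of_mem_convexHull_add_nonneg (by simp) hx0
      (fun j => div_le_one_of_le₀ (hyr j) hr0.le) ?_ hβ
    rintro _ ⟨i, rfl⟩
    exact single_le_sum (f := fun i => ∏ j, x j ^ (α i j : ℝ))
      (fun i _ => prod_nonneg fun j _ => Real.rpow_nonneg (hx0 j) _) (mem_univ i)
  calc r ^ D * ∏ j, y j ^ β j = r ^ (∑ j, β j) * (r ^ D * ∏ j, x j ^ β j) := by
        rw [hy]; ring
    _ ≤ r ^ (∑ j, β j) * (r ^ D * ∑ i, ∏ j, x j ^ α i j) := by gcongr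
    _ ≤ r ^ (∑ j, β j) * ∑ i, ∏ j, y j ^ α i j := by
        rw [mul_sum]
        gcongr with i
        rw [hy]
        exact mul_le_mul_of_nonneg_right (pow_le_pow_of_le_one hr0.le hr1 (hD i))
          (prod_nonneg fun j _ => pow_nonneg (hx0 j) _)

theorem norm_add_pow_sub_pow_le {R : Type*} [NormedRing R] [NormOneClass R] {a h : R} {r : ℝ}
    (ha : ‖a‖ ≤ r) (hh : ‖h‖ ≤ r) (k : ℕ) :
    r * ‖(a + h) ^ k - a ^ k‖ ≤ ‖h‖ * (4 * r) ^ k := by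
  have hr : 0 ≤ r := (norm_nonneg a).trans ha
  induction k with
  | zero => simp
  | succ k ih =>
    have hsplit :
        (a + h) ^ (k + 1) - a ^ (k + 1) = (a + h) * ((a + h) ^ k - a ^ k) + h * a ^ k := by
      rw [pow_succ', pow_succ']; noncomm_ring
    have hah : ‖a + h‖ ≤ 2 * r := (norm_add_le a h).trans (by linarith)
    have hak : ‖a ^ k‖ ≤ r ^ k := (norm_pow_le a k).trans (pow_le_pow_left₀ (norm_nonneg a) ha k)
    calc r * ‖(a + h) ^ (k + 1) - a ^ (k + 1)‖
        ≤ ‖a + h‖ * (r * ‖(a + h) ^ k - a ^ k‖) + r * (‖h‖ * ‖a ^ k‖) := by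
          rw [hsplit]
          nlinarith [norm_add_le ((a + h) * ((a + h) ^ k - a ^ k)) (h * a ^ k),
            norm_mul_le (a + h) ((a + h) ^ k - a ^ k), norm_mul_le h (a ^ k)]
      _ ≤ 2 * r * (‖h‖ * (4 * r) ^ k) + r * (‖h‖ * (4 * r) ^ k) := by
          gcongr
          exact hak.trans (pow_le_pow_left₀ hr (by linarith) k)
      _ ≤ ‖h‖ * (4 * r) ^ (k + 1) := by
          have h4r : 0 ≤ ‖h‖ * (4 * r) ^ k := by positivity
          rw [pow_succ]
          nlinarith [mul_nonneg h4r hr]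

section Monomial

variable {𝕜 κ ι : Type*} [NormedField 𝕜] [Fintype κ] [Fintype ι] [DecidableEq ι] {j₀ : ι}
  {α : κ → ι → ℕ} {D : ℕ} {r : ℝ}

theorem pow_mul_norm_prod_pow_le_of_mem_newtonPolyhedron (hα : ∀ i, α i j₀ = 0) {β : ι → ℕ}
    (hβ : (fun j : {j // j ≠ j₀} => (β j : ℝ)) ∈
      newtonPolyhedron fun i (j : {j // j ≠ j₀}) => (α i j : ℝ))
    (hD : ∀ i, ∑ j : {j // j ≠ j₀}, α i j ≤ D) (hr0 : 0 < r) (hr1 : r ≤ 1)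
    {z : ι → 𝕜} (hz : ∀ j, ‖z j‖ ≤ r) :
    r ^ D * ‖∏ j : {j // j ≠ j₀}, z j ^ β j‖ ≤
      r ^ (∑ j : {j // j ≠ j₀}, β j) * ∑ i, ‖∏ j, z j ^ α i j‖ := by
  have hA : ∀ i, ‖∏ j, z j ^ α i j‖ = ∏ j : {j // j ≠ j₀}, ‖z j‖ ^ α i j := fun i => by
    simp [norm_prod, Fintype.prod_eq_mul_prod_subtype_ne _ j₀, hα]
  simp only [hA, norm_prod, norm_pow]
  exact pow_mul_prod_pow_le_of_mem_newtonPolyhedron hβ hD hr0 hr1 (fun _ => norm_nonneg _)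
    fun j => hz j

theorem pow_mul_norm_mul_prod_pow_le (hα : ∀ i, α i j₀ = 0) {β : ι → ℕ} {X h : 𝕜} {a : ℕ}
    (hβ : X ≠ 0 → (fun j : {j // j ≠ j₀} => (β j : ℝ)) ∈
      newtonPolyhedron fun i (j : {j // j ≠ j₀}) => (α i j : ℝ))
    (hD : ∀ i, ∑ j : {j // j ≠ j₀}, α i j ≤ D) (hr0 : 0 < r) (hr1 : r ≤ 1)
    {z : ι → 𝕜} (hz : ∀ j, ‖z j‖ ≤ r) (hX : r * ‖X‖ ≤ ‖h‖ * (4 * r) ^ a) :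
    r ^ (D + 1) * ‖X * ∏ j : {j // j ≠ j₀}, z j ^ β j‖ ≤
      ‖h‖ * (4 * r) ^ (a + ∑ j : {j // j ≠ j₀}, β j) * ∑ i, ‖∏ j, z j ^ α i j‖ := by
  rcases eq_or_ne X 0 with rfl | hX0
  · simp only [zero_mul, norm_zero, mul_zero]; positivity
  have hQ := pow_mul_norm_prod_pow_le_of_mem_newtonPolyhedron hα (hβ hX0) hD hr0 hr1 hz
  have hr4 : r ^ (∑ j : {j // j ≠ j₀}, β j) ≤ (4 * r) ^ (∑ j : {j // j ≠ j₀}, β j) :=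
    pow_le_pow_left₀ hr0.le (by linarith) _
  calc r ^ (D + 1) * ‖X * ∏ j : {j // j ≠ j₀}, z j ^ β j‖
      = (r * ‖X‖) * (r ^ D * ‖∏ j : {j // j ≠ j₀}, z j ^ β j‖) := by rw [norm_mul]; ring
    _ ≤ (‖h‖ * (4 * r) ^ a) *
          ((4 * r) ^ (∑ j : {j // j ≠ j₀}, β j) * ∑ i, ‖∏ j, z j ^ α i j‖) :=
        mul_le_mul hX (hQ.trans (by gcongr)) (by positivity) (by positivity)
    _ = _ := by ring

theorem pow_mul_norm_add_pow_mul_prod_sub_le (hα : ∀ i, α i j₀ = 0) {β : ι → ℕ} {k : ℕ}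
    (hβ : k ≠ 0 → (fun j : {j // j ≠ j₀} => (β j : ℝ)) ∈
      newtonPolyhedron fun i (j : {j // j ≠ j₀}) => (α i j : ℝ))
    (hD : ∀ i, ∑ j : {j // j ≠ j₀}, α i j ≤ D) (hr0 : 0 < r) (hr1 : r ≤ 1)
    {t h : 𝕜} {z : ι → 𝕜} (ht : ‖t‖ ≤ r) (hh : ‖h‖ ≤ r) (hz : ∀ j, ‖z j‖ ≤ r) :
    r ^ (D + 1) * ‖(t + h) ^ k * ∏ j, z j ^ β j - t ^ k * ∏ j, z j ^ β j‖ ≤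
      ‖h‖ * (4 * r) ^ (k + ∑ j, β j) * ∑ i, ‖∏ j, z j ^ α i j‖ := by
  have hX : r * ‖((t + h) ^ k - t ^ k) * z j₀ ^ β j₀‖ ≤ ‖h‖ * (4 * r) ^ (k + β j₀) := by
    rw [norm_mul, norm_pow, pow_add, ← mul_assoc, ← mul_assoc]
    exact mul_le_mul (norm_add_pow_sub_pow_le ht hh k)
      (pow_le_pow_left₀ (norm_nonneg _) ((hz j₀).trans (by linarith)) _) (by positivity)
      (by positivity)
  have hβ' : ((t + h) ^ k - t ^ k) * z j₀ ^ β j₀ ≠ 0 → _ := fun hX0 =>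
    hβ fun hk => hX0 (by simp [hk])
  convert pow_mul_norm_mul_prod_pow_le hα hβ' hD hr0 hr1 hz hX using 3
  · rw [Fintype.prod_eq_mul_prod_subtype_ne _ j₀]; ring
  · rw [Fintype.sum_eq_add_sum_subtype_ne _ j₀, add_assoc]

theorem pow_mul_norm_pow_mul_prod_add_single_sub_le (hα : ∀ i, α i j₀ = 0) {β : ι → ℕ} {k : ℕ}
    (hβ : β j₀ ≠ 0 → (fun j : {j // j ≠ j₀} => (β j : ℝ)) ∈
      newtonPolyhedron fun i (j : {j // j ≠ j₀}) => (α i j : ℝ))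
    (hD : ∀ i, ∑ j : {j // j ≠ j₀}, α i j ≤ D) (hr0 : 0 < r) (hr1 : r ≤ 1)
    {t h : 𝕜} {z : ι → 𝕜} (ht : ‖t‖ ≤ r) (hh : ‖h‖ ≤ r) (hz : ∀ j, ‖z j‖ ≤ r) :
    r ^ (D + 1) * ‖t ^ k * ∏ j, (z + Pi.single j₀ h : ι → 𝕜) j ^ β j - t ^ k * ∏ j, z j ^ β j‖ ≤
      ‖h‖ * (4 * r) ^ (k + ∑ j, β j) * ∑ i, ‖∏ j, z j ^ α i j‖ := by
  have hX : r * ‖t ^ k * ((z j₀ + h) ^ β j₀ - z j₀ ^ β j₀)‖ ≤ ‖h‖ * (4 * r) ^ (k + β j₀) := by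
    rw [norm_mul, norm_pow, pow_add, mul_left_comm, mul_left_comm ‖h‖]
    exact mul_le_mul (pow_le_pow_left₀ (norm_nonneg _) (ht.trans (by linarith)) _)
      (norm_add_pow_sub_pow_le (hz j₀) hh _) (by positivity) (by positivity)
  have hβ' : t ^ k * ((z j₀ + h) ^ β j₀ - z j₀ ^ β j₀) ≠ 0 → _ := fun hX0 =>
    hβ fun hk => hX0 (by simp [hk])
  convert pow_mul_norm_mul_prod_pow_le hα hβ' hD hr0 hr1 hz hX using 3
  · simp only [Fintype.prod_eq_mul_prod_subtype_ne _ j₀, Pi.add_apply, Pi.single_eq_same]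
    have hne : ∀ j : {j // j ≠ j₀}, z j + (Pi.single j₀ h : ι → 𝕜) j = z j := fun j => by
      rw [Pi.single_eq_of_ne j.2, add_zero]
    simp only [hne]
    ring
  · rw [Fintype.sum_eq_add_sum_subtype_ne _ j₀, add_assoc]

end Monomial

theorem norm_fderiv_apply_le_of_hasSum {𝕜 E F ι : Type*} [NontriviallyNormedField 𝕜]
    [NormedAddCommGroup E] [NormedSpace 𝕜 E] [NormedAddCommGroup F] [NormedSpace 𝕜 F]
    {f : E → F} {g : ι → E → F} {x v : E} {r : ℝ} {M : ι → ℝ}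
    (hf : DifferentiableAt 𝕜 f x) (hr : 0 < r) (hM0 : ∀ i, 0 ≤ M i) (hM : Summable M)
    (hsum : ∀ h : 𝕜, ‖h‖ ≤ r → HasSum (fun i => g i (x + h • v)) (f (x + h • v)))
    (hg : ∀ h : 𝕜, ‖h‖ ≤ r → ∀ i, ‖g i (x + h • v) - g i x‖ ≤ ‖h‖ * M i) :
    ‖fderiv 𝕜 f x v‖ ≤ ∑' i, M i := by
  have hline : HasDerivAt (fun h : 𝕜 => f (x + h • v)) (fderiv 𝕜 f x v) 0 := by
    have hf' : HasFDerivAt f (fderiv 𝕜 f x) (x + (0 : 𝕜) • v) := by simpa using hf.hasFDerivAt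
    simpa [Function.comp_def] using
      hf'.comp_hasDerivAt 0 (((hasDerivAt_id (0 : 𝕜)).smul_const v).const_add x)
  refine hline.le_of_lip' (tsum_nonneg hM0) ?_
  filter_upwards [Metric.closedBall_mem_nhds (0 : 𝕜) hr] with h hh
  rw [mem_closedBall_zero_iff] at hh
  have hx := hsum 0 (by simpa using hr.le)
  rw [zero_smul, add_zero] at hx
  simpa [mul_comm] using
    ((hsum h hh).sub hx).norm_le_of_bounded (hM.hasSum.mul_left ‖h‖) (hg h hh)

theorem mul_norm_fderiv_apply_le_of_hasSum {𝕜 ι : Type*} [NontriviallyNormedField 𝕜] [Fintype ι]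
    {f : 𝕜 × (ι → 𝕜) → 𝕜} {U : Set (𝕜 × (ι → 𝕜))} {c : ℕ → (ι → ℕ) → 𝕜}
    (hsum : ∀ y ∈ U, HasSum (fun p : ℕ × (ι → ℕ) =>
      c p.1 p.2 * y.1 ^ p.1 * ∏ j, y.2 j ^ p.2 j) (f y))
    {R B s r : ℝ} (hR0 : 0 ≤ R) (hB : 0 ≤ B) (hs : 0 < s) (hr : 0 < r)
    (hR : Summable fun p : ℕ × (ι → ℕ) => ‖c p.1 p.2‖ * R ^ (p.1 + ∑ j, p.2 j))
    {x v : 𝕜 × (ι → 𝕜)} (hf : DifferentiableAt 𝕜 f x) (hU : ∀ h : 𝕜, ‖h‖ ≤ r → x + h • v ∈ U)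
    (hmono : ∀ h : 𝕜, ‖h‖ ≤ r → ∀ k β, c k β ≠ 0 →
      s * ‖(x + h • v).1 ^ k * ∏ j, (x + h • v).2 j ^ β j - x.1 ^ k * ∏ j, x.2 j ^ β j‖ ≤
        ‖h‖ * R ^ (k + ∑ j, β j) * B) :
    s * ‖fderiv 𝕜 f x v‖ ≤ (∑' p : ℕ × (ι → ℕ), ‖c p.1 p.2‖ * R ^ (p.1 + ∑ j, p.2 j)) * B := by
  rw [← le_div_iff₀' hs, mul_div_assoc, ← tsum_mul_right]
  refine norm_fderiv_apply_le_of_hasSum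
    (g := fun p y => c p.1 p.2 * y.1 ^ p.1 * ∏ j, y.2 j ^ p.2 j) hf hr (fun p => ?_)
    (hR.mul_right _)
    (fun h hh => by exact hsum _ (hU h hh)) fun h hh p => ?_
  · positivity
  · rcases eq_or_ne (c p.1 p.2) 0 with hc | hc
    · simp [hc]
    rw [mul_assoc, mul_assoc, ← mul_sub, norm_mul, mul_div_assoc', mul_div_assoc', le_div_iff₀ hs]
    linarith [mul_le_mul_of_nonneg_left (hmono h hh p.1 p.2 hc) (norm_nonneg (c p.1 p.2))]

theorem norm_prod_mk_le {E F ι : Type*} [SeminormedAddCommGroup E] [SeminormedAddCommGroup F]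
    [Fintype ι] {t : E} {z : ι → F} {R : ℝ} (ht : ‖t‖ ≤ R) (hz : ∀ j, ‖z j‖ ≤ R) :
    ‖(t, z)‖ ≤ R :=
  norm_prod_le_iff.2 ⟨ht, (pi_norm_le_iff_of_nonneg ((norm_nonneg t).trans ht)).2 hz⟩

theorem summable_norm_coeff_mul_pow {ι : Type*} [Fintype ι] {c : ℕ → (ι → ℕ) → ℂ} {R : ℝ}
    (hR : 0 ≤ R)
    (h : Summable fun p : ℕ × (ι → ℕ) => c p.1 p.2 * (R : ℂ) ^ p.1 * ∏ j, (R : ℂ) ^ p.2 j) :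
    Summable fun p : ℕ × (ι → ℕ) => ‖c p.1 p.2‖ * R ^ (p.1 + ∑ j, p.2 j) := by
  refine h.norm.congr fun p => ?_
  simp only [norm_mul, norm_pow, Complex.norm_real, Real.norm_of_nonneg hR, prod_pow_eq_pow_sum,
    pow_add]
  ring

section Estimate

variable {n m : ℕ} [NeZero n] {f : ℂ × (Fin n → ℂ) → ℂ} {U : Set (ℂ × (Fin n → ℂ))}
  {c : ℕ → (Fin n → ℕ) → ℂ} {α : Fin m → Fin n → ℕ} {D : ℕ} {r : ℝ}

theorem pow_mul_norm_fderiv_add_norm_fderiv_le (hf : AnalyticOnNhd ℂ f U)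
    (hsum : ∀ x ∈ U, HasSum (fun p : ℕ × (Fin n → ℕ) =>
      c p.1 p.2 * x.1 ^ p.1 * ∏ j, x.2 j ^ p.2 j) (f x))
    (hα0 : ∀ i, α i 0 = 0)
    (hnewton : ∀ k β, c k β ≠ 0 → k ≠ 0 ∨ β 0 ≠ 0 →
      (fun j : {j : Fin n // j ≠ 0} => (β j : ℝ)) ∈
        newtonPolyhedron fun i (j : {j : Fin n // j ≠ 0}) => (α i j : ℝ))
    (hD : ∀ i, ∑ j : {j : Fin n // j ≠ 0}, α i j ≤ D) (hr0 : 0 < r) (hr1 : r ≤ 1)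
    (hrU : Metric.closedBall 0 (4 * r) ⊆ U) {t : ℂ} {z : Fin n → ℂ} (ht : ‖t‖ ≤ r)
    (hz : ∀ j, ‖z j‖ ≤ r) :
    r ^ (D + 1) * (‖fderiv ℂ f (t, z) (1, 0)‖ + ‖fderiv ℂ f (t, z) (0, Pi.single 0 1)‖) ≤
      2 * (∑' p : ℕ × (Fin n → ℕ), ‖c p.1 p.2‖ * (4 * r) ^ (p.1 + ∑ j, p.2 j)) *
        ∑ i, ‖∏ j, z j ^ α i j‖ := by
  have hmem : ∀ y, ‖y‖ ≤ 4 * r → y ∈ U := fun y hy => hrU (mem_closedBall_zero_iff.2 hy)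
  have h4r : ‖((4 * r : ℝ) : ℂ)‖ ≤ 4 * r := by simp [abs_of_pos hr0]
  have hR := summable_norm_coeff_mul_pow (c := c) (R := 4 * r) (by positivity)
    (by exact (hsum _ (hmem (_, fun _ => _) (norm_prod_mk_le h4r fun _ => h4r))).summable)
  have hshift : ∀ v : ℂ × (Fin n → ℂ), ‖v‖ ≤ 1 → ∀ h : ℂ, ‖h‖ ≤ r → (t, z) + h • v ∈ U :=
    fun v hv h hh => hmem _ <| (norm_add_le _ _).trans <| by
      rw [norm_smul]
      nlinarith [norm_prod_mk_le ht hz, norm_nonneg h, norm_nonneg v]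
  have hd : DifferentiableAt ℂ f (t, z) :=
    (hf _ (hmem _ ((norm_prod_mk_le ht hz).trans (by linarith)))).differentiableAt
  have h₁ := mul_norm_fderiv_apply_le_of_hasSum hsum (v := (1, 0)) (s := r ^ (D + 1))
    (B := ∑ i, ‖∏ j, z j ^ α i j‖) (by positivity) (by positivity) (by positivity) hr0 hR hd
    (hshift _ (by simp)) fun h hh k β hc => by
      simpa using pow_mul_norm_add_pow_mul_prod_sub_le hα0 (fun hk => hnewton k β hc (Or.inl hk))
        hD hr0 hr1 ht hh hz
  have h₂ := mul_norm_fderiv_apply_le_of_hasSum hsum (v := (0, Pi.single 0 1)) (s := r ^ (D + 1))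
    (B := ∑ i, ‖∏ j, z j ^ α i j‖) (by positivity) (by positivity) (by positivity) hr0 hR hd
    (hshift _ (by simp [Pi.norm_single])) fun h hh k β hc => by
      simpa [Pi.single_apply] using pow_mul_norm_pow_mul_prod_add_single_sub_le hα0
        (fun hk => hnewton k β hc (Or.inr hk)) hD hr0 hr1 ht hh hz
  linarith

end Estimate

/-- Relation (r2) of Step 2: if the Taylor coefficients of the analytic function `f(t,z)`
satisfy conditions (a) and (b) coming from admissibility, then near the origin
`|∂f/∂t| + |∂f/∂z₁| ≲ Σ_i |z^{α_i}|`. -/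
theorem deriv_t_z1_dominated {n m : ℕ} [NeZero n] (hm : 0 < m)
    (f : ℂ × (Fin n → ℂ) → ℂ) (U : Set (ℂ × (Fin n → ℂ)))
    (hU : U ∈ nhds (0 : ℂ × (Fin n → ℂ))) (hf : AnalyticOnNhd ℂ f U)
    (c : ℕ → (Fin n → ℕ) → ℂ)
    (hsum : ∀ x ∈ U, HasSum (fun p : ℕ × (Fin n → ℕ) =>
      c p.1 p.2 * x.1 ^ p.1 * ∏ j, x.2 j ^ p.2 j) (f x))
    (α : Fin m → Fin n → ℕ) (hα0 : ∀ i, α i 0 = 0)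
    -- (a): every monomial of `f` containing `z₁` satisfies `β_j ≥ a_j := max_i α_i_j`
    -- for all `j ≠ 1`
    (ha : ∀ k β, c k β ≠ 0 → 1 ≤ β 0 →
      ∀ j : Fin n, j ≠ 0 → (Finset.univ.sup fun i => α i j) ≤ β j)
    -- (b): every monomial of `∂f/∂t` not containing `z₁` lies on or above the Newton
    -- polyhedron determined by the `α_i` (in the variables `z₂,…,z_n`)
    (hb : ∀ k β, c k β ≠ 0 → 1 ≤ k → β 0 = 0 →
      (fun j : {j : Fin n // j ≠ 0} => (β j.1 : ℝ)) ∈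
        convexHull ℝ (Set.range fun i => fun j : {j : Fin n // j ≠ 0} => (α i j.1 : ℝ)) +
          {x : {j : Fin n // j ≠ 0} → ℝ | ∀ j, 0 ≤ x j}) :
    ∃ C > 0, ∃ r > 0, ∀ (t : ℂ) (z : Fin n → ℂ),
      ‖t‖ ≤ r → (∀ j, ‖z j‖ ≤ r) →
      ‖fderiv ℂ f (t, z) (1, 0)‖ +
          ‖fderiv ℂ f (t, z) (0, Pi.single 0 1)‖ ≤
        C * ∑ i, ‖∏ j, z j ^ α i j‖ := by
  obtain ⟨ε, hε, hεU⟩ := Metric.nhds_basis_closedBall.mem_iff.1 hU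
  set r := min (ε / 4) 1
  have hr0 : 0 < r := lt_min (by positivity) one_pos
  have hrU : Metric.closedBall 0 (4 * r) ⊆ U :=
    (Metric.closedBall_subset_closedBall (by linarith [min_le_left (ε / 4) 1])).trans hεU
  have hnewton : ∀ k β, c k β ≠ 0 → k ≠ 0 ∨ β 0 ≠ 0 →
      (fun j : {j : Fin n // j ≠ 0} => (β j : ℝ)) ∈
        newtonPolyhedron fun i (j : {j : Fin n // j ≠ 0}) => (α i j : ℝ) := by
    intro k β hc hkβ
    rcases eq_or_ne (β 0) 0 with hβ0 | hβ0
    · exact hb k β hc (by omega) hβ0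
    · have := Fin.pos_iff_nonempty.1 hm
      exact natCast_mem_newtonPolyhedron_of_sup_le fun j => ha k β hc (by omega) j j.2
  set D := ∑ i, ∑ j : {j : Fin n // j ≠ 0}, α i j
  have hD : ∀ i, ∑ j : {j : Fin n // j ≠ 0}, α i j ≤ D := fun i =>
    single_le_sum (f := fun i => ∑ j : {j : Fin n // j ≠ 0}, α i j) (fun _ _ => Nat.zero_le _)
      (mem_univ i)
  set S := ∑' p : ℕ × (Fin n → ℕ), ‖c p.1 p.2‖ * (4 * r) ^ (p.1 + ∑ j, p.2 j)
  refine ⟨2 * S / r ^ (D + 1) + 1, by positivity, r, hr0, fun t z ht hz => ?_⟩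
  have key := pow_mul_norm_fderiv_add_norm_fderiv_le hf hsum hα0 hnewton hD hr0
    (min_le_right _ _) hrU ht hz
  rw [← le_div_iff₀' (by positivity), mul_div_right_comm] at key
  nlinarith [sum_nonneg fun i (_ : i ∈ univ) => norm_nonneg (∏ j, z j ^ α i j)]
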